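/- arXiv:2410.23849 — 2 statements merged into one kernel-verified Lean document; each statement's English description precedes it below -/
import Mathlib

section
/- Let n, σ, m ∈ ℕ and n̂ ∈ ℕ with n̂ ≥ n + σ, let A₀, A₁, ..., A_m be real symmetric n×n matrices, let b ∈ ℝ^m, and let r ∈ ℕ. Define F := {X : X real symmetric positive semidefinite n×n matrix with ⟨A_i, X⟩ = b_i for all i ∈ {1,...,m}}, and call X ∈ F optimal if ⟨A₀, X⟩ ≤ ⟨A₀, X'⟩ for all X' ∈ F. Define F̂ := {X : X real symmetric positive semidefinite n̂×n̂ matrix with ⟨A_i, X_{1:n,1:n}⟩ = b_i for all i ∈ {1,...,m}, X_{n+1:n+σ,1:n} = 0_{σ×n}, and X_{n+1:n+σ,n+1:n+σ} = I_σ}, and call X ∈ F̂ optimal if ⟨A₀, X_{1:n,1:n}⟩ ≤ ⟨A₀, X'_{1:n,1:n}⟩ for all X' ∈ F̂. If every optimal element of F has rank at least r, then every optimal element of F̂ has rank at least r + σ. -/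
/-!
The top-left block `Y` of an optimal `X ∈ F̂` lies in `F`, and conversely every `X' ∈ F` is the
top-left block of a point of `F̂` with the same objective value: extend `diag(X', I_σ)` by zero.
So `Y` is optimal for `F` and `rank Y ≥ r`. By symmetry of `X`, its principal submatrix on the
first `n + σ` indices is `diag(Y, I_σ)`, of rank `rank Y + σ`, and principal submatrices do not
increase the rank.
-/

open Matrix

theorem LinearMap.finrank_range_prodMap {K M₁ M₂ N₁ N₂ : Type*} [DivisionRing K]
    [AddCommGroup M₁] [AddCommGroup M₂] [AddCommGroup N₁] [AddCommGroup N₂]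
    [Module K M₁] [Module K M₂] [Module K N₁] [Module K N₂]
    [FiniteDimensional K N₁] [FiniteDimensional K N₂] (f : M₁ →ₗ[K] N₁) (g : M₂ →ₗ[K] N₂) :
    Module.finrank K (f.prodMap g).range = Module.finrank K f.range + Module.finrank K g.range := by
  have h : (f.prodMap g).range = (f.range.subtype.prodMap g.range.subtype).range := by
    simp only [range_prodMap, Submodule.range_subtype]
  rw [h, finrank_range_of_inj (Subtype.val_injective.prodMap Subtype.val_injective),
    Module.finrank_prod]

namespace Matrix

section PosSemidef
variable {ι κ ν R : Type*} [Fintype ι] [Fintype κ] [Fintype ν]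
  [CommRing R] [PartialOrder R] [StarRing R]

theorem PosSemidef.fromBlocks_zero_zero [StarOrderedRing R] {A : Matrix ι ι R}
    {D : Matrix κ κ R} (hA : A.PosSemidef) (hD : D.PosSemidef) :
    (fromBlocks A 0 0 D).PosSemidef := by
  refine .of_dotProduct_mulVec_nonneg (hA.isHermitian.fromBlocks (by simp) hD.isHermitian)
    fun x ↦ ?_
  rw [← Sum.elim_comp_inl_inr x, fromBlocks_mulVec]
  simp only [zero_mulVec, add_zero, zero_add, Function.star_sumElim, sumElim_dotProduct_sumElim]
  exact add_nonneg (hA.dotProduct_mulVec_nonneg _) (hD.dotProduct_mulVec_nonneg _)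

theorem PosSemidef.exists_submatrix_eq [DecidableEq ν] {M : Matrix ι ι R} (hM : M.PosSemidef)
    {w : ι → ν} (hw : Function.Injective w) :
    ∃ N : Matrix ν ν R, N.PosSemidef ∧ N.submatrix w w = M := by
  classical
  set P : Matrix ι ν R := (1 : Matrix ν ν R).submatrix w id
  refine ⟨Pᴴ * M * P, hM.conjTranspose_mul_mul_same P, ?_⟩
  have hP : P.submatrix id w = 1 := submatrix_one w hw
  rw [submatrix_mul _ _ _ id _ Function.bijective_id,
    submatrix_mul _ _ _ id _ Function.bijective_id]
  simp [P, hP, ← conjTranspose_submatrix]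

end PosSemidef

theorem rank_fromBlocks_zero_zero {ι κ K : Type*} [Fintype ι] [Fintype κ] [DecidableEq ι]
    [DecidableEq κ] [Field K] (A : Matrix ι ι K) (D : Matrix κ κ K) :
    (fromBlocks A 0 0 D).rank = A.rank + D.rank := by
  set b := Pi.basisFun K ι
  set c := Pi.basisFun K κ
  have h := LinearMap.toMatrix_prodMap b c (toLin b b A) (toLin c c D)
  rw [LinearMap.toMatrix_toLin, LinearMap.toMatrix_toLin] at h
  rw [← h, rank_eq_finrank_range_toLin _ (b.prod c) (b.prod c), toLin_toMatrix,
    rank_eq_finrank_range_toLin A b b, rank_eq_finrank_range_toLin D c c]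
  exact LinearMap.finrank_range_prodMap _ _

end Matrix

section SDP
variable {ι κ ν μ : Type*} [Fintype ι] [DecidableEq κ]

def sdpFeasibleSet (A : μ → Matrix ι ι ℝ) (b : μ → ℝ) : Set (Matrix ι ι ℝ) :=
  {X | X.PosSemidef ∧ ∀ i, ((A i)ᵀ * X).trace = b i}

/-- The paper's `F̂` when `u` and `v` embed the index blocks `1:n` and `n+1:n+σ` into `1:n̂`. -/
def extendedFeasibleSet (A : μ → Matrix ι ι ℝ) (b : μ → ℝ) (u : ι → ν) (v : κ → ν) :
    Set (Matrix ν ν ℝ) :=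
  {X | X.PosSemidef ∧ (∀ i, ((A i)ᵀ * X.submatrix u u).trace = b i) ∧
    X.submatrix v u = 0 ∧ X.submatrix v v = 1}

variable {A : μ → Matrix ι ι ℝ} {b : μ → ℝ} {u : ι → ν} {v : κ → ν} {X : Matrix ν ν ℝ}

theorem mem_extendedFeasibleSet_iff :
    X ∈ extendedFeasibleSet A b u v ↔
      X.PosSemidef ∧ (∀ i, ((A i)ᵀ * X.submatrix u u).trace = b i) ∧
        (∀ p q, X (v p) (u q) = 0) ∧ ∀ p q, X (v p) (v q) = if p = q then 1 else 0 := by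
  simp only [extendedFeasibleSet, Set.mem_ofPred_eq, ← Matrix.ext_iff, submatrix_apply,
    Matrix.zero_apply, one_apply]

theorem submatrix_mem_sdpFeasibleSet (hX : X ∈ extendedFeasibleSet A b u v) :
    X.submatrix u u ∈ sdpFeasibleSet A b :=
  ⟨hX.1.submatrix u, hX.2.1⟩

theorem submatrix_sumElim_eq_fromBlocks (hX : X ∈ extendedFeasibleSet A b u v) :
    X.submatrix (Sum.elim u v) (Sum.elim u v) = fromBlocks (X.submatrix u u) 0 0 1 := by
  obtain ⟨hpsd, -, hvu, hvv⟩ := hX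
  have huv : X.submatrix u v = 0 := by
    rw [← hpsd.isHermitian.eq, conjTranspose_eq_transpose_of_trivial, ← transpose_submatrix, hvu,
      transpose_zero]
  rw [← hvu, ← huv, ← hvv, ← fromBlocks_toBlocks (X.submatrix _ _)]
  rfl

theorem rank_submatrix_add_card_le [Fintype κ] [Fintype ν]
    (hX : X ∈ extendedFeasibleSet A b u v) : (X.submatrix u u).rank + Fintype.card κ ≤ X.rank := by
  classical
  calc (X.submatrix u u).rank + Fintype.card κ
      = (fromBlocks (X.submatrix u u) 0 0 (1 : Matrix κ κ ℝ)).rank := by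
        rw [rank_fromBlocks_zero_zero, rank_one]
    _ = (X.submatrix (Sum.elim u v) (Sum.elim u v)).rank := by
        rw [submatrix_sumElim_eq_fromBlocks hX]
    _ ≤ X.rank := rank_submatrix_le _ _ _

theorem exists_mem_extendedFeasibleSet [Fintype κ] [Fintype ν]
    (huv : Function.Injective (Sum.elim u v)) {Y : Matrix ι ι ℝ} (hY : Y ∈ sdpFeasibleSet A b) :
    ∃ X ∈ extendedFeasibleSet A b u v, X.submatrix u u = Y := by
  classical
  obtain ⟨N, hN, hNY⟩ :=
    (hY.1.fromBlocks_zero_zero (PosSemidef.one (R := ℝ) (n := κ))).exists_submatrix_eq huv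
  have hNu : N.submatrix u u = Y := congrArg toBlocks₁₁ hNY
  exact ⟨N, ⟨hN, hNu ▸ hY.2, congrArg toBlocks₂₁ hNY, congrArg toBlocks₂₂ hNY⟩, hNu⟩

theorem isMinOn_sdpFeasibleSet_submatrix [Fintype κ] [Fintype ν]
    (huv : Function.Injective (Sum.elim u v)) (C : Matrix ι ι ℝ)
    (hmin : IsMinOn (fun X ↦ (Cᵀ * X.submatrix u u).trace) (extendedFeasibleSet A b u v) X) :
    IsMinOn (fun Y ↦ (Cᵀ * Y).trace) (sdpFeasibleSet A b) (X.submatrix u u) := by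
  intro Y hY
  obtain ⟨X', hX', rfl⟩ := exists_mem_extendedFeasibleSet huv hY
  exact hmin hX'

theorem le_rank_of_isMinOn_extendedFeasibleSet [Fintype κ] [Fintype ν]
    (huv : Function.Injective (Sum.elim u v)) (C : Matrix ι ι ℝ) (r : ℕ)
    (hrank : ∀ Y ∈ sdpFeasibleSet A b, IsMinOn (fun Y ↦ (Cᵀ * Y).trace) (sdpFeasibleSet A b) Y →
      r ≤ Y.rank)
    (hX : X ∈ extendedFeasibleSet A b u v)
    (hmin : IsMinOn (fun X ↦ (Cᵀ * X.submatrix u u).trace) (extendedFeasibleSet A b u v) X) :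
    r + Fintype.card κ ≤ X.rank :=
  (Nat.add_le_add_right (hrank _ (submatrix_mem_sdpFeasibleSet hX)
    (isMinOn_sdpFeasibleSet_submatrix huv C hmin)) _).trans (rank_submatrix_add_card_le hX)

end SDP

/-- Extending an SDP by a `σ×σ` identity block increases the minimal rank of optimal
solutions by `σ`: if every optimal solution of the original SDP has rank at least `r`, then
every optimal solution of the extended SDP has rank at least `r + σ`. -/
theorem extended_SDP_rank (n σ m nh : ℕ) (hnh : n + σ ≤ nh)
    (A0 : Matrix (Fin n) (Fin n) ℝ)
    (A : Fin m → Matrix (Fin n) (Fin n) ℝ)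
    (b : Fin m → ℝ) (r : ℕ)
    (horig : ∀ X : Matrix (Fin n) (Fin n) ℝ,
      X.PosSemidef → (∀ i, ((A i)ᵀ * X).trace = b i) →
      (∀ X' : Matrix (Fin n) (Fin n) ℝ, X'.PosSemidef →
        (∀ i, ((A i)ᵀ * X').trace = b i) → (A0ᵀ * X).trace ≤ (A0ᵀ * X').trace) →
      r ≤ X.rank) :
    ∀ X : Matrix (Fin nh) (Fin nh) ℝ,
      X.PosSemidef →
      (∀ i, ((A i)ᵀ *
        Matrix.of (fun p q : Fin n => X ⟨(p : ℕ), by omega⟩ ⟨(q : ℕ), by omega⟩)).trace = b i) →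
      (∀ (p : Fin σ) (q : Fin n), X ⟨n + (p : ℕ), by omega⟩ ⟨(q : ℕ), by omega⟩ = 0) →
      (∀ p q : Fin σ,
        X ⟨n + (p : ℕ), by omega⟩ ⟨n + (q : ℕ), by omega⟩ = if p = q then (1:ℝ) else 0) →
      (∀ X' : Matrix (Fin nh) (Fin nh) ℝ, X'.PosSemidef →
        (∀ i, ((A i)ᵀ *
          Matrix.of (fun p q : Fin n =>
            X' ⟨(p : ℕ), by omega⟩ ⟨(q : ℕ), by omega⟩)).trace = b i) →
        (∀ (p : Fin σ) (q : Fin n), X' ⟨n + (p : ℕ), by omega⟩ ⟨(q : ℕ), by omega⟩ = 0) →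
        (∀ p q : Fin σ,
          X' ⟨n + (p : ℕ), by omega⟩ ⟨n + (q : ℕ), by omega⟩ = if p = q then (1:ℝ) else 0) →
        (A0ᵀ *
          Matrix.of (fun p q : Fin n => X ⟨(p : ℕ), by omega⟩ ⟨(q : ℕ), by omega⟩)).trace
          ≤ (A0ᵀ *
            Matrix.of (fun p q : Fin n =>
              X' ⟨(p : ℕ), by omega⟩ ⟨(q : ℕ), by omega⟩)).trace) →
      r + σ ≤ X.rank := by
  intro X hX hfeas hzero hid hopt
  set u : Fin n → Fin nh := Fin.castLE hnh ∘ Fin.castAdd σ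
  set v : Fin σ → Fin nh := Fin.castLE hnh ∘ Fin.natAdd n
  have huv : Function.Injective (Sum.elim u v) := by
    -- `finSumFinEquiv` is definitionally `Sum.elim (Fin.castAdd σ) (Fin.natAdd n)`.
    rw [← Sum.comp_elim]
    exact (Fin.castLE_injective hnh).comp finSumFinEquiv.injective
  have hrank : ∀ Y ∈ sdpFeasibleSet A b,
      IsMinOn (fun Y ↦ (A0ᵀ * Y).trace) (sdpFeasibleSet A b) Y → r ≤ Y.rank :=
    fun Y hY hmin ↦ horig Y hY.1 hY.2 fun X' hX'psd hX'feas ↦ hmin ⟨hX'psd, hX'feas⟩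
  have hmin : IsMinOn (fun X ↦ (A0ᵀ * X.submatrix u u).trace) (extendedFeasibleSet A b u v) X := by
    intro X' hX'
    obtain ⟨hX'psd, hX'feas, hX'zero, hX'id⟩ := mem_extendedFeasibleSet_iff.1 hX'
    exact hopt X' hX'psd hX'feas hX'zero hX'id
  simpa using le_rank_of_isMinOn_extendedFeasibleSet huv A0 r hrank
    (mem_extendedFeasibleSet_iff.2 ⟨hX, hfeas, hzero, hid⟩) hmin
end

section
/- Let ℓ, σ ∈ ℕ and let A := [I_ℓ; 1_ℓᵀ] ∈ ℝ^{(ℓ+1)×ℓ} be the ℓ×ℓ identity matrix stacked on top of the all-ones row vector of length ℓ. Consider the set F of real symmetric positive semidefinite (ℓ+1+σ)×(ℓ+1+σ) matrices X satisfying: X_{ii} = 1 for all i ∈ {1,...,ℓ+1}; Aᵀ X_{1:ℓ+1,1:ℓ+1} A = I_ℓ + 1_ℓ1_ℓᵀ; X_{ℓ+2:ℓ+1+σ, 1:ℓ+1} = 0_{σ×(ℓ+1)}; and X_{ℓ+2:ℓ+1+σ, ℓ+2:ℓ+1+σ} = I_σ. Then F is nonempty (it contains the identity matrix I_{ℓ+1+σ})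 and every X ∈ F has rank exactly ℓ + 1 + σ. -/
open Matrix

noncomputable section

/-- The `(ℓ+1)×ℓ` matrix `A = [I_ℓ; 1_ℓᵀ]`: the identity stacked on top of the all-ones row. -/
def Amat (l : ℕ) : Matrix (Fin (l+1)) (Fin l) ℝ :=
  Matrix.of fun i j => if (i : ℕ) = (j : ℕ) ∨ (i : ℕ) = l then 1 else 0

/-- Membership in the extended feasible set `F`: `X` is a symmetric PSD
`(ℓ+1+σ)×(ℓ+1+σ)` matrix whose first `ℓ+1` diagonal entries are `1`, whose top-left
`(ℓ+1)×(ℓ+1)` block `Z` satisfies `AᵀZA = I_ℓ + 1_ℓ1_ℓᵀ`, whose lower-left `σ×(ℓ+1)` block is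
zero, and whose lower-right `σ×σ` block is the identity. -/
def FfeasExt (l σ : ℕ) (X : Matrix (Fin (l+1+σ)) (Fin (l+1+σ)) ℝ) : Prop :=
  X.PosSemidef ∧
  (∀ i : Fin (l+1), X ⟨(i : ℕ), by omega⟩ ⟨(i : ℕ), by omega⟩ = 1) ∧
  (Amat l)ᵀ *
      Matrix.of (fun p q : Fin (l+1) => X ⟨(p : ℕ), by omega⟩ ⟨(q : ℕ), by omega⟩) *
      (Amat l) = 1 + Matrix.of (fun _ _ : Fin l => (1:ℝ)) ∧
  (∀ (p : Fin σ) (q : Fin (l+1)), X ⟨l + 1 + (p : ℕ), by omega⟩ ⟨(q : ℕ), by omega⟩ = 0) ∧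
  (∀ p q : Fin σ,
    X ⟨l + 1 + (p : ℕ), by omega⟩ ⟨l + 1 + (q : ℕ), by omega⟩ = if p = q then (1:ℝ) else 0)

lemma Amat_apply (l : ℕ) (i : Fin (l+1)) (j : Fin l) :
    Amat l i j = (if i = j.castSucc then 1 else 0) + (if i = Fin.last l then 1 else 0) := by
  have hj := j.isLt
  by_cases h1 : (i : ℕ) = (j : ℕ) <;> by_cases h2 : (i : ℕ) = l <;>
    simp [Amat, Fin.ext_iff, h1, h2, Fin.last] <;> omega

lemma AZA_entry (l : ℕ) (Z : Matrix (Fin (l+1)) (Fin (l+1)) ℝ) (j k : Fin l) :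
    ((Amat l)ᵀ * Z * Amat l) j k =
      Z j.castSucc k.castSucc + Z j.castSucc (Fin.last l) +
      Z (Fin.last l) k.castSucc + Z (Fin.last l) (Fin.last l) := by
  simp only [Matrix.mul_apply, Matrix.transpose_apply, Amat_apply, add_mul, mul_add,
    ite_mul, mul_ite, one_mul, mul_one, zero_mul, mul_zero, Finset.sum_add_distrib,
    Finset.sum_ite_eq', Finset.mem_univ, if_true]
  ring

lemma Z_eq_one (l : ℕ) (Z : Matrix (Fin (l+1)) (Fin (l+1)) ℝ)
    (hsym : Zᵀ = Z) (hdiag : ∀ i, Z i i = 1)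
    (hAZA : (Amat l)ᵀ * Z * Amat l = 1 + Matrix.of (fun _ _ : Fin l => (1:ℝ))) :
    Z = 1 := by
  have hsym' : ∀ a b, Z a b = Z b a := fun a b => by
    conv_lhs => rw [← hsym, Matrix.transpose_apply]
  have hE : ∀ j k : Fin l,
      Z j.castSucc k.castSucc + Z j.castSucc (Fin.last l) +
      Z (Fin.last l) k.castSucc + Z (Fin.last l) (Fin.last l)
      = (if j = k then 1 else 0) + 1 := by
    intro j k
    have := congrFun (congrFun hAZA j) k
    rw [AZA_entry] at this
    simpa [Matrix.one_apply] using this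
  have hL : ∀ j : Fin l, Z j.castSucc (Fin.last l) = 0 := by
    intro j
    have h := hE j j
    rw [hdiag, hdiag, hsym' (Fin.last l) j.castSucc] at h
    simp at h
    linarith
  have hoff : ∀ j k : Fin l, j ≠ k → Z j.castSucc k.castSucc = 0 := by
    intro j k hjk
    have h := hE j k
    rw [hL j, hsym' (Fin.last l) k.castSucc, hL k, hdiag] at h
    simp [hjk] at h
    linarith
  ext a b
  by_cases hab : a = b
  · subst hab; simp [Matrix.one_apply, hdiag]
  · rw [Matrix.one_apply_ne hab]
    rcases Fin.eq_castSucc_or_eq_last a with ⟨j, rfl⟩ | rfl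
    · rcases Fin.eq_castSucc_or_eq_last b with ⟨k, rfl⟩ | rfl
      · exact hoff j k (fun h => hab (by rw [h]))
      · exact hL j
    · rcases Fin.eq_castSucc_or_eq_last b with ⟨k, rfl⟩ | rfl
      · rw [hsym' (Fin.last l) k.castSucc]; exact hL k
      · exact absurd rfl hab

lemma FfeasExt_eq_one (l σ : ℕ) (X : Matrix (Fin (l+1+σ)) (Fin (l+1+σ)) ℝ)
    (hX : FfeasExt l σ X) : X = 1 := by
  obtain ⟨hpsd, hdiag, hAZA, hlow, hlr⟩ := hX
  have hsym : ∀ a b, X a b = X b a := fun a b => by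
    have h := congrFun (congrFun hpsd.isHermitian b) a
    simp only [Matrix.conjTranspose_apply, RCLike.star_def, starRingEnd_apply, star_trivial] at h
    exact h
  have hZ : (Matrix.of (fun p q : Fin (l+1) =>
      X ⟨(p : ℕ), by omega⟩ ⟨(q : ℕ), by omega⟩)) = 1 := by
    apply Z_eq_one l _ _ _ hAZA
    · ext p q; exact hsym _ _
    · intro i; exact hdiag i
  ext a b
  rcases lt_or_ge (a : ℕ) (l+1) with ha | ha <;> rcases lt_or_ge (b : ℕ) (l+1) with hb | hb
  · -- both in the top-left block
    have h := congrFun (congrFun hZ ⟨a, ha⟩) ⟨b, hb⟩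
    simp only [Matrix.of_apply, Matrix.one_apply, Fin.ext_iff] at h
    have e1 : X a b = X ⟨(a : ℕ), by omega⟩ ⟨(b : ℕ), by omega⟩ := by
      congr 1 <;> exact Fin.ext rfl
    rw [e1, h]
    simp [Matrix.one_apply, Fin.ext_iff]
  · -- a top, b bottom
    have h := hlow ⟨(b : ℕ) - (l+1), by omega⟩ ⟨a, ha⟩
    have e1 : X a b = X ⟨l + 1 + ((b : ℕ) - (l+1)), by omega⟩ ⟨(a : ℕ), by omega⟩ := by
      rw [hsym]; congr 1 <;> apply Fin.ext <;> simp <;> omega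
    rw [e1, h, Matrix.one_apply_ne (by simp [Fin.ext_iff]; omega)]
  · -- a bottom, b top
    have h := hlow ⟨(a : ℕ) - (l+1), by omega⟩ ⟨b, hb⟩
    have e1 : X a b = X ⟨l + 1 + ((a : ℕ) - (l+1)), by omega⟩ ⟨(b : ℕ), by omega⟩ := by
      congr 1 <;> apply Fin.ext <;> simp <;> omega
    rw [e1, h, Matrix.one_apply_ne (by simp [Fin.ext_iff]; omega)]
  · -- both bottom
    have h := hlr ⟨(a : ℕ) - (l+1), by omega⟩ ⟨(b : ℕ) - (l+1), by omega⟩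
    have e1 : X a b = X ⟨l + 1 + ((a : ℕ) - (l+1)), by omega⟩
        ⟨l + 1 + ((b : ℕ) - (l+1)), by omega⟩ := by
      congr 1 <;> apply Fin.ext <;> simp <;> omega
    rw [e1, h]
    simp only [Matrix.one_apply, Fin.ext_iff, Fin.mk.injEq]
    split_ifs <;> first | rfl | (exfalso; omega)


lemma one_mem_FfeasExt (l σ : ℕ) : FfeasExt l σ 1 := by
  refine ⟨Matrix.PosSemidef.one, ?_, ?_, ?_, ?_⟩
  · intro i; exact Matrix.one_apply_eq _
  · have hblk : (Matrix.of (fun p q : Fin (l+1) =>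
        (1 : Matrix (Fin (l+1+σ)) (Fin (l+1+σ)) ℝ) ⟨(p : ℕ), by omega⟩ ⟨(q : ℕ), by omega⟩))
        = (1 : Matrix (Fin (l+1)) (Fin (l+1)) ℝ) := by
      ext p q
      simp [Matrix.one_apply, Fin.ext_iff]
    rw [hblk]
    ext j k
    rw [AZA_entry]
    have h1 : j.castSucc ≠ Fin.last l := (Fin.castSucc_lt_last j).ne
    have h2 : (Fin.last l) ≠ k.castSucc := (Fin.castSucc_lt_last k).ne'
    simp [Matrix.one_apply, h1, h2, Fin.castSucc_inj]
  · intro p q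
    exact Matrix.one_apply_ne (by simp [Fin.ext_iff]; omega)
  · intro p q
    simp only [Matrix.one_apply, Fin.ext_iff, Fin.mk.injEq]
    split_ifs <;> first | rfl | (exfalso; omega)

/-- `F` is nonempty — it contains the identity matrix — and every member of `F` has rank
exactly `ℓ + 1 + σ`. -/
theorem FfeasExt_id_mem_and_rank (l σ : ℕ) :
    FfeasExt l σ 1 ∧ ∀ X, FfeasExt l σ X → X.rank = l + 1 + σ := by
  refine ⟨one_mem_FfeasExt l σ, fun X hX => ?_⟩
  rw [FfeasExt_eq_one l σ X hX, Matrix.rank_one]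
  simp
end
end
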